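/- arXiv:2511.22560 — 2 statements merged into one kernel-verified Lean document; each statement's English description precedes it below -/
import Mathlib

section
/- The ring R = F₂[ρ, rᵢ : i ∈ ℕ]/(rᵢ² − ρ·r_{i+1} : i ∈ ℕ) is free as a module over the univariate polynomial ring F₂[ρ]: there exists an F₂[ρ]-basis of R indexed by the finite subsets S ⊆ ℕ whose S-th element is the residue class of the squarefree monomial ∏_{i∈S} rᵢ (the empty product being 1). -/
noncomputable section

/-- The base field `F₂ = ℤ/2ℤ`. -/
abbrev F2 := ZMod 2

/-- The polynomial ring `P = F₂[ρ, rᵢ : i ∈ ℕ]`; the variable `none` is `ρ`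
and the variable `some i` is `rᵢ`. -/
abbrev P := MvPolynomial (Option ℕ) F2

/-- The variable `ρ`. -/
def ρP : P := MvPolynomial.X none

/-- The variable `rᵢ`. -/
def rP (i : ℕ) : P := MvPolynomial.X (some i)

/-- The ideal `I = (rᵢ² − ρ·r_{i+1} : i ∈ ℕ)`. -/
def Irel : Ideal P := Ideal.span (Set.range fun i : ℕ => rP i ^ 2 - ρP * rP (i + 1))

/-- The quotient ring `R = P/I`. -/
abbrev R := P ⧸ Irel

/-- The residue class of `ρ` in `R`. -/
def ρR : R := Ideal.Quotient.mk Irel ρP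

/-- `R` as an algebra over the univariate polynomial ring `F₂[ρ]`, via `ρ ↦` class of `ρ`. -/
instance : Algebra (Polynomial F2) R :=
  (Polynomial.aeval ρR).toRingHom.toAlgebra


/-!
Spanning: in `R` one has `rᵢ · r_S = r_{S ∪ {i}}` for `i ∉ S` and `rᵢ · r_S = ρ · r_{i+1} · r_{S ∖ {i}}`
for `i ∈ S`, so by induction on `|S|` the `F₂[ρ]`-span of the squarefree monomials `r_S` is closed
under multiplication by the generators and hence is everything.

Independence: `ρ ↦ T`, `rᵢ ↦ T^(1 - 2^i) X^(2^i)` respects the relations and defines an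
`F₂[ρ]`-linear map `R → F₂[T, T⁻¹][X]` sending `r_S` to a unit times `X^(∑_{i ∈ S} 2^i)`.
By uniqueness of binary expansions these are distinct powers of `X`, and `F₂[ρ] → F₂[T, T⁻¹]`
is injective.
-/

namespace R

open Polynomial
open LaurentPolynomial (T T_add T_pow isUnit_T)
open scoped LaurentPolynomial

def rProd (S : Finset ℕ) : R := Ideal.Quotient.mk Irel (∏ i ∈ S, rP i)

lemma smul_eq_aeval_mul (p : F2[X]) (x : R) : p • x = aeval ρR p * x := rfl

lemma mk_rP_sq (i : ℕ) :
    Ideal.Quotient.mk Irel (rP i) ^ 2 = ρR * Ideal.Quotient.mk Irel (rP (i + 1)) := by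
  rw [ρR, ← map_pow, ← map_mul, Ideal.Quotient.mk_eq_mk_iff_sub_mem]
  exact Ideal.subset_span ⟨i, rfl⟩

section Spanning

local notation "M" => Submodule.span F2[X] (Set.range rProd)

lemma rProd_mem_span (S : Finset ℕ) : rProd S ∈ M := Submodule.subset_span ⟨S, rfl⟩

lemma ρR_mul_mem_span {x : R} (hx : x ∈ M) : ρR * x ∈ M := by
  simpa [smul_eq_aeval_mul] using Submodule.smul_mem _ (X : F2[X]) hx

lemma mk_rP_mul_rProd_mem_span (S : Finset ℕ) (i : ℕ) :
    Ideal.Quotient.mk Irel (rP i) * rProd S ∈ M := by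
  induction S using Finset.strongInduction generalizing i with
  | H S ih =>
    by_cases hi : i ∈ S
    · have hS : rProd S = Ideal.Quotient.mk Irel (rP i) * rProd (S.erase i) := by
        rw [rProd, rProd, ← map_mul, Finset.mul_prod_erase S rP hi]
      rw [hS, ← mul_assoc, ← sq, mk_rP_sq, mul_assoc]
      exact ρR_mul_mem_span (ih _ (Finset.erase_ssubset hi) (i + 1))
    · rw [rProd, ← map_mul, ← Finset.prod_insert hi]
      exact rProd_mem_span _

lemma mul_mk_X_mem_span {x : R} (hx : x ∈ M) (j : Option ℕ) :
    x * Ideal.Quotient.mk Irel (MvPolynomial.X j) ∈ M := by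
  induction hx using Submodule.span_induction with
  | mem y hy =>
    obtain ⟨S, rfl⟩ := hy
    rw [mul_comm]
    cases j with
    | none => exact ρR_mul_mem_span (rProd_mem_span S)
    | some i => exact mk_rP_mul_rProd_mem_span S i
  | zero => simp
  | add y z _ _ hy hz => rw [add_mul]; exact Submodule.add_mem _ hy hz
  | smul c y _ hy => rw [smul_mul_assoc]; exact Submodule.smul_mem _ c hy

lemma span_rProd_eq_top : M = ⊤ := by
  rw [eq_top_iff]
  rintro x -
  obtain ⟨p, rfl⟩ := Ideal.Quotient.mk_surjective x
  induction p using MvPolynomial.induction_on with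
  | C a =>
    have h : Ideal.Quotient.mk Irel (MvPolynomial.C a) = (C a : F2[X]) • rProd ∅ := by
      rw [smul_eq_aeval_mul, rProd, Finset.prod_empty, map_one, mul_one, aeval_C]
      rfl
    exact h ▸ Submodule.smul_mem _ _ (rProd_mem_span ∅)
  | add p q hp hq => rw [map_add]; exact Submodule.add_mem _ hp hq
  | mul_X p j hp => rw [map_mul]; exact mul_mk_X_mem_span hp j

end Spanning

section Independence

def laurentImage : Option ℕ → F2[T;T⁻¹][X]
  | none => C (T 1)
  | some i => C (T (1 - 2 ^ i)) * X ^ 2 ^ i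

lemma laurentImage_rel (i : ℕ) :
    MvPolynomial.aeval laurentImage (rP i ^ 2 - ρP * rP (i + 1)) = 0 := by
  simp only [map_sub, map_mul, map_pow, rP, ρP, MvPolynomial.aeval_X, laurentImage]
  rw [sub_eq_zero, mul_pow, ← C_pow, T_pow, ← pow_mul, ← mul_assoc, ← C_mul, ← T_add, pow_succ]
  congr 3
  push_cast [pow_succ]
  ring

lemma Irel_le_ker_aeval_laurentImage :
    Irel ≤ RingHom.ker (MvPolynomial.aeval laurentImage : P →ₐ[F2] F2[T;T⁻¹][X]) :=
  Ideal.span_le.mpr (Set.range_subset_iff.mpr laurentImage_rel)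

def toLaurentₐ : R →ₐ[F2] F2[T;T⁻¹][X] :=
  Ideal.Quotient.liftₐ Irel (MvPolynomial.aeval laurentImage) fun _ ha =>
    Irel_le_ker_aeval_laurentImage ha

lemma toLaurentₐ_mk (p : P) :
    toLaurentₐ (Ideal.Quotient.mk Irel p) = MvPolynomial.aeval laurentImage p := rfl

lemma toLaurentₐ_aeval_ρR (p : F2[X]) :
    toLaurentₐ (aeval ρR p) = algebraMap F2[X] F2[T;T⁻¹][X] p := by
  rw [← aeval_algHom_apply, ρR, toLaurentₐ_mk, ← IsScalarTower.toAlgHom_apply F2]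
  congr 1
  refine algHom_ext ?_
  simp [ρP, laurentImage, Polynomial.algebraMap_apply]

def toLaurentₗ : R →ₗ[F2[X]] F2[T;T⁻¹][X] where
  toFun := toLaurentₐ
  map_add' := map_add toLaurentₐ
  map_smul' p x := by
    rw [smul_eq_aeval_mul, map_mul, toLaurentₐ_aeval_ρR, ← Algebra.smul_def]
    rfl

lemma toLaurentₗ_rProd (S : Finset ℕ) :
    toLaurentₗ (rProd S) = (∏ i ∈ S, T (1 - 2 ^ i) : F2[T;T⁻¹]) • X ^ (∑ i ∈ S, 2 ^ i) := by
  change toLaurentₐ (Ideal.Quotient.mk Irel _) = _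
  simp only [toLaurentₐ_mk, map_prod, rP, MvPolynomial.aeval_X, laurentImage]
  rw [Finset.prod_mul_distrib, ← map_prod, Finset.prod_pow_eq_pow_sum, C_mul']

lemma linearIndependent_rProd : LinearIndependent F2[X] rProd := by
  refine LinearIndependent.of_comp toLaurentₗ ?_
  have hX : LinearIndependent F2[T;T⁻¹]
      fun S : Finset ℕ => (X ^ (∑ i ∈ S, 2 ^ i) : F2[T;T⁻¹][X]) := by
    simpa [coe_basisMonomials, Function.comp_def, monomial_one_right_eq_X_pow] using
      (basisMonomials F2[T;T⁻¹]).linearIndependent.comp _ (Finset.geomSum_injective le_rfl)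
  have hinj : Function.Injective fun p : F2[X] => p • (1 : F2[T;T⁻¹]) := by
    simpa [Algebra.smul_def, LaurentPolynomial.algebraMap_eq_toLaurent] using
      Polynomial.toLaurent_injective
  convert (hX.units_smul fun S => ∏ i ∈ S, (isUnit_T (1 - 2 ^ i)).unit).restrict_scalars hinj
    using 1
  ext1 S
  simp [toLaurentₗ_rProd, Units.smul_def]

end Independence

end R

/-- `R = F₂[ρ, rᵢ : i ∈ ℕ]/(rᵢ² − ρ·r_{i+1})` is a free `F₂[ρ]`-module, with basis indexed
by the finite subsets `S ⊆ ℕ`, whose `S`-th element is the residue class of `∏_{i∈S} rᵢ`. -/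
theorem R_free_over_polynomial_F2 :
    ∃ b : Module.Basis (Finset ℕ) (Polynomial F2) R,
      ∀ S : Finset ℕ, b S = Ideal.Quotient.mk Irel (∏ i ∈ S, rP i) :=
  ⟨Module.Basis.mk R.linearIndependent_rProd R.span_rProd_eq_top.ge,
    Module.Basis.mk_apply R.linearIndependent_rProd _⟩

end
end

section
/- There is an isomorphism of F₂-algebras R ⊗_A B ≅ C that sends (class of ρ)⊗1 to the class of ρ, (class of rᵢ)⊗1 to the class of rᵢ, 1⊗(class of τᵢ) to the class of τᵢ, and 1⊗(class of ξⱼ) to the class of ξⱼ; under this isomorphism the element 1⊗(class of τ) corresponds to the class of ρ·r₀. -/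
set_option synthInstance.maxHeartbeats 1000000
set_option maxHeartbeats 1000000

noncomputable section

open scoped TensorProduct

/-- The index set `{j : ℕ // 1 ≤ j}` for the variables `ξⱼ`, `j ≥ 1`. -/
abbrev Ξ := {j : ℕ // 1 ≤ j}

def rR (i : ℕ) : R := Ideal.Quotient.mk Irel (rP i)

/-! ### The base ring `A = F₂[τ, ρ]` -/

/-- `A = F₂[τ, ρ]`; the variable `0` is `τ` and the variable `1` is `ρ`. -/
abbrev A := MvPolynomial (Fin 2) F2

/-- `R` as an `A`-algebra via `τ ↦ ρ·r₀` and `ρ ↦ ρ`. -/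
instance instAR : Algebra A R :=
  (MvPolynomial.aeval ![ρR * rR 0, ρR]).toRingHom.toAlgebra

/-! ### The motivic dual Steenrod algebra
`B = F₂[τ, ρ, τᵢ, ξ_{i+1} : i ≥ 0]/(τᵢ² − τ·ξ_{i+1} − ρ·τ_{i+1} − ρ·τ₀·ξ_{i+1})` -/

/-- Variables of `B`: `inl ()` is `τ`, `inr (inl ())` is `ρ`, `inr (inr (inl i))` is `τᵢ`,
`inr (inr (inr j))` is `ξⱼ` for `j ≥ 1`. -/
abbrev BVar := Unit ⊕ Unit ⊕ ℕ ⊕ Ξ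

abbrev PB := MvPolynomial BVar F2

def τPB : PB := MvPolynomial.X (Sum.inl ())
def ρPB : PB := MvPolynomial.X (Sum.inr (Sum.inl ()))
def τiPB (i : ℕ) : PB := MvPolynomial.X (Sum.inr (Sum.inr (Sum.inl i)))
def ξPB (j : Ξ) : PB := MvPolynomial.X (Sum.inr (Sum.inr (Sum.inr j)))

/-- The ideal `(τᵢ² − τ·ξ_{i+1} − ρ·τ_{i+1} − ρ·τ₀·ξ_{i+1} : i ∈ ℕ)`. -/
def JB : Ideal PB :=
  Ideal.span (Set.range fun i : ℕ =>
    τiPB i ^ 2 - τPB * ξPB ⟨i + 1, Nat.succ_le_succ (Nat.zero_le i)⟩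
      - ρPB * τiPB (i + 1) - ρPB * τiPB 0 * ξPB ⟨i + 1, Nat.succ_le_succ (Nat.zero_le i)⟩)

abbrev B := PB ⧸ JB

def τB : B := Ideal.Quotient.mk JB τPB
def ρB : B := Ideal.Quotient.mk JB ρPB
def τiB (i : ℕ) : B := Ideal.Quotient.mk JB (τiPB i)
def ξB (j : Ξ) : B := Ideal.Quotient.mk JB (ξPB j)

/-- `B` as an `A`-algebra via `τ ↦ τ` and `ρ ↦ ρ`. -/
instance instAB : Algebra A B :=
  (MvPolynomial.aeval ![τB, ρB]).toRingHom.toAlgebra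

/-! ### The isotropic dual Steenrod algebra
`C = F₂[ρ, rᵢ, τᵢ, ξ_{i+1} : i ≥ 0]/(rᵢ² − ρ·r_{i+1}, τᵢ² − ρ·τ_{i+1} − ρ·(r₀+τ₀)·ξ_{i+1})` -/

/-- Variables of `C`: `inl ()` is `ρ`, `inr (inl i)` is `rᵢ`, `inr (inr (inl i))` is `τᵢ`,
`inr (inr (inr j))` is `ξⱼ` for `j ≥ 1`. -/
abbrev CVar := Unit ⊕ ℕ ⊕ ℕ ⊕ Ξ

abbrev PC := MvPolynomial CVar F2

def ρPC : PC := MvPolynomial.X (Sum.inl ())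
def rPC (i : ℕ) : PC := MvPolynomial.X (Sum.inr (Sum.inl i))
def τiPC (i : ℕ) : PC := MvPolynomial.X (Sum.inr (Sum.inr (Sum.inl i)))
def ξPC (j : Ξ) : PC := MvPolynomial.X (Sum.inr (Sum.inr (Sum.inr j)))

/-- The ideal of relations of `C`. -/
def JC : Ideal PC :=
  Ideal.span
    ((Set.range fun i : ℕ => rPC i ^ 2 - ρPC * rPC (i + 1)) ∪
      Set.range fun i : ℕ =>
        τiPC i ^ 2 - ρPC * τiPC (i + 1)
          - ρPC * (rPC 0 + τiPC 0) * ξPC ⟨i + 1, Nat.succ_le_succ (Nat.zero_le i)⟩)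

abbrev C := PC ⧸ JC

def ρC : C := Ideal.Quotient.mk JC ρPC
def rC (i : ℕ) : C := Ideal.Quotient.mk JC (rPC i)
def τiC (i : ℕ) : C := Ideal.Quotient.mk JC (τiPC i)
def ξC (j : Ξ) : C := Ideal.Quotient.mk JC (ξPC j)

instance : IsScalarTower F2 A R :=
  IsScalarTower.of_algebraMap_eq fun x =>
    ((MvPolynomial.aeval (R := F2) ![ρR * rR 0, ρR]).commutes x).symm

instance : SMulCommClass A F2 R :=
  ⟨fun a c x => by
    rw [Algebra.smul_def, Algebra.smul_def (A := R) c, Algebra.smul_def,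
      Algebra.smul_def (A := R) c, mul_left_comm]⟩

/-!
Both sides are presented by generators and relations, so the two maps are defined on generators
and checked on relations. In `R ⊗_A B` the base ring identifies `ρ ⊗ 1 = 1 ⊗ ρ` and
`ρr₀ ⊗ 1 = 1 ⊗ τ`, which turns the relation `τᵢ² = τξᵢ₊₁ + ρτᵢ₊₁ + ρτ₀ξᵢ₊₁` of `B` into the
relation `τᵢ² = ρτᵢ₊₁ + ρ(r₀ + τ₀)ξᵢ₊₁` of `C`. Both composites fix the generators.
-/

namespace MvPolynomial

variable {σ K : Type*}

section QuotientSpan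

variable {S : Type*} [CommRing K] [CommSemiring S] [Algebra K S]

def quotientSpanLift (s : Set (MvPolynomial σ K)) (x : σ → S) (hx : ∀ p ∈ s, aeval x p = 0) :
    MvPolynomial σ K ⧸ Ideal.span s →ₐ[K] S :=
  Ideal.Quotient.liftₐ _ (aeval x) fun _ hp =>
    Ideal.span_le (I := RingHom.ker (aeval x)) |>.mpr hx hp

@[simp]
theorem quotientSpanLift_mk_X (s : Set (MvPolynomial σ K)) (x : σ → S)
    (hx : ∀ p ∈ s, aeval x p = 0) (i : σ) :
    quotientSpanLift s x hx (Ideal.Quotient.mk _ (X i)) = x i :=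
  aeval_X x i

theorem quotient_algHom_ext {I : Ideal (MvPolynomial σ K)} {f g : MvPolynomial σ K ⧸ I →ₐ[K] S}
    (h : ∀ i, f (Ideal.Quotient.mk I (X i)) = g (Ideal.Quotient.mk I (X i))) : f = g :=
  Ideal.Quotient.algHom_ext K (algHom_ext h)

end QuotientSpan

section ExtendScalars

variable {S T : Type*} [CommSemiring K] [Semiring S] [Semiring T] [Algebra K S]
  [Algebra K T] [Algebra (MvPolynomial σ K) S] [Algebra (MvPolynomial σ K) T]
  [IsScalarTower K (MvPolynomial σ K) S] [IsScalarTower K (MvPolynomial σ K) T]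

def _root_.AlgHom.extendScalarsOfX (f : S →ₐ[K] T)
    (hf : ∀ i : σ,
      f (algebraMap (MvPolynomial σ K) S (X i)) = algebraMap (MvPolynomial σ K) T (X i)) :
    S →ₐ[MvPolynomial σ K] T :=
  { f with
    commutes' := AlgHom.congr_fun <| MvPolynomial.algHom_ext
      (f := f.comp (IsScalarTower.toAlgHom K _ S)) (g := IsScalarTower.toAlgHom K _ T) hf }

end ExtendScalars

end MvPolynomial

instance : IsScalarTower F2 A B :=
  IsScalarTower.of_algebraMap_eq fun x =>
    ((MvPolynomial.aeval (R := F2) ![τB, ρB]).commutes x).symm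

instance instAC : Algebra A C :=
  (MvPolynomial.aeval ![ρC * rC 0, ρC]).toRingHom.toAlgebra

instance : IsScalarTower F2 A C :=
  IsScalarTower.of_algebraMap_eq fun x =>
    ((MvPolynomial.aeval (R := F2) ![ρC * rC 0, ρC]).commutes x).symm

@[simp] theorem algebraMap_τ_R : algebraMap A R (MvPolynomial.X 0) = ρR * rR 0 :=
  MvPolynomial.aeval_X _ _

@[simp] theorem algebraMap_ρ_R : algebraMap A R (MvPolynomial.X 1) = ρR :=
  MvPolynomial.aeval_X _ _

@[simp] theorem algebraMap_τ_B : algebraMap A B (MvPolynomial.X 0) = τB :=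
  MvPolynomial.aeval_X _ _

@[simp] theorem algebraMap_ρ_B : algebraMap A B (MvPolynomial.X 1) = ρB :=
  MvPolynomial.aeval_X _ _

@[simp] theorem algebraMap_τ_C : algebraMap A C (MvPolynomial.X 0) = ρC * rC 0 :=
  MvPolynomial.aeval_X _ _

@[simp] theorem algebraMap_ρ_C : algebraMap A C (MvPolynomial.X 1) = ρC :=
  MvPolynomial.aeval_X _ _

theorem rR_sq_sub (i : ℕ) : rR i ^ 2 - ρR * rR (i + 1) = 0 := by
  have h := Ideal.Quotient.mk_span_range (fun i : ℕ => rP i ^ 2 - ρP * rP (i + 1)) i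
  rwa [map_sub, map_pow, map_mul] at h

theorem τiB_sq_sub (i : ℕ) :
    τiB i ^ 2 - τB * ξB ⟨i + 1, i.succ_pos⟩ - ρB * τiB (i + 1)
      - ρB * τiB 0 * ξB ⟨i + 1, i.succ_pos⟩ = 0 := by
  have h := Ideal.Quotient.mk_span_range (fun i : ℕ => τiPB i ^ 2 - τPB * ξPB ⟨i + 1, i.succ_pos⟩
      - ρPB * τiPB (i + 1) - ρPB * τiPB 0 * ξPB ⟨i + 1, i.succ_pos⟩) i
  rwa [map_sub, map_sub, map_sub, map_pow, map_mul, map_mul, map_mul, map_mul] at h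

theorem rC_sq_sub (i : ℕ) : rC i ^ 2 - ρC * rC (i + 1) = 0 := by
  have h := Ideal.Quotient.eq_zero_iff_mem.mpr
    (Ideal.subset_span (Or.inl ⟨i, rfl⟩) : rPC i ^ 2 - ρPC * rPC (i + 1) ∈ JC)
  rwa [map_sub, map_pow, map_mul] at h

theorem τiC_sq_sub (i : ℕ) :
    τiC i ^ 2 - ρC * τiC (i + 1) - ρC * (rC 0 + τiC 0) * ξC ⟨i + 1, i.succ_pos⟩ = 0 := by
  have h := Ideal.Quotient.eq_zero_iff_mem.mpr (Ideal.subset_span (Or.inr ⟨i, rfl⟩) :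
    τiPC i ^ 2 - ρPC * τiPC (i + 1) - ρPC * (rPC 0 + τiPC 0) * ξPC ⟨i + 1, i.succ_pos⟩ ∈ JC)
  rwa [map_sub, map_sub, map_pow, map_mul, map_mul, map_mul, map_add] at h

def rToC : R →ₐ[F2] C :=
  MvPolynomial.quotientSpanLift _ (fun v => v.elim ρC rC) <| by
    rintro _ ⟨i, rfl⟩
    simpa [rP, ρP] using rC_sq_sub i

@[simp] theorem rToC_ρR : rToC ρR = ρC := MvPolynomial.quotientSpanLift_mk_X _ _ _ _

@[simp] theorem rToC_rR (i : ℕ) : rToC (rR i) = rC i := MvPolynomial.quotientSpanLift_mk_X _ _ _ _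

def bToC : B →ₐ[F2] C :=
  MvPolynomial.quotientSpanLift _ (Sum.elim (fun _ => ρC * rC 0) <| Sum.elim (fun _ => ρC) <|
    Sum.elim τiC ξC) <| by
    rintro _ ⟨i, rfl⟩
    simp only [τiPB, τPB, ρPB, ξPB, map_sub, map_mul, map_pow, MvPolynomial.aeval_X, Sum.elim_inl,
      Sum.elim_inr]
    linear_combination τiC_sq_sub i

@[simp] theorem bToC_τB : bToC τB = ρC * rC 0 := MvPolynomial.quotientSpanLift_mk_X _ _ _ _

@[simp] theorem bToC_ρB : bToC ρB = ρC := MvPolynomial.quotientSpanLift_mk_X _ _ _ _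

@[simp] theorem bToC_τiB (i : ℕ) : bToC (τiB i) = τiC i :=
  MvPolynomial.quotientSpanLift_mk_X _ _ _ _

@[simp] theorem bToC_ξB (j : Ξ) : bToC (ξB j) = ξC j := MvPolynomial.quotientSpanLift_mk_X _ _ _ _

def tensorToC : R ⊗[A] B →ₐ[A] C :=
  Algebra.TensorProduct.lift (rToC.extendScalarsOfX <| by simp [Fin.forall_fin_two])
    (bToC.extendScalarsOfX <| by simp [Fin.forall_fin_two]) fun _ _ => .all _ _

@[simp] theorem tensorToC_tmul (r : R) (b : B) : tensorToC (r ⊗ₜ b) = rToC r * bToC b :=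
  Algebra.TensorProduct.lift_tmul _ _ _ _ _

theorem ρR_tmul_one : ρR ⊗ₜ[A] (1 : B) = 1 ⊗ₜ ρB := by
  rw [← algebraMap_ρ_R, ← algebraMap_ρ_B, Algebra.TensorProduct.tmul_one_eq_one_tmul]

theorem ρR_tmul_one_mul_rR_zero_tmul_one : ρR ⊗ₜ[A] (1 : B) * rR 0 ⊗ₜ[A] 1 = 1 ⊗ₜ τB := by
  rw [Algebra.TensorProduct.tmul_mul_tmul, mul_one, ← algebraMap_τ_R, ← algebraMap_τ_B,
    Algebra.TensorProduct.tmul_one_eq_one_tmul]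

def cToTensor : C →ₐ[F2] R ⊗[A] B :=
  MvPolynomial.quotientSpanLift _
    (Sum.elim (fun _ => ρR ⊗ₜ 1) <| Sum.elim (fun i => rR i ⊗ₜ 1) <|
      Sum.elim (fun i => 1 ⊗ₜ τiB i) (fun j => 1 ⊗ₜ ξB j) : CVar → R ⊗[A] B) <| by
    -- `map_pow` finds no `MonoidHomClass` instance for maps into `R ⊗[A] B`, so expand squares
    rintro _ (⟨i, rfl⟩ | ⟨i, rfl⟩) <;>
      simp only [rPC, τiPC, ρPC, ξPC, sq, map_sub, map_mul, map_add, MvPolynomial.aeval_X,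
        Sum.elim_inl, Sum.elim_inr]
    · rw [Algebra.TensorProduct.tmul_mul_tmul, Algebra.TensorProduct.tmul_mul_tmul, mul_one,
        ← TensorProduct.sub_tmul, ← sq, rR_sq_sub, TensorProduct.zero_tmul]
    · have hB := congrArg (Algebra.TensorProduct.includeRight : B →ₐ[A] R ⊗[A] B) (τiB_sq_sub i)
      simp only [map_sub, map_mul, map_pow, map_zero, Algebra.TensorProduct.includeRight_apply]
        at hB
      linear_combination hB - (1 ⊗ₜ τiB (i + 1) + 1 ⊗ₜ τiB 0 * 1 ⊗ₜ ξB ⟨i + 1, i.succ_pos⟩) *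
        ρR_tmul_one - 1 ⊗ₜ ξB ⟨i + 1, i.succ_pos⟩ * ρR_tmul_one_mul_rR_zero_tmul_one

@[simp] theorem cToTensor_ρC : cToTensor ρC = ρR ⊗ₜ 1 := MvPolynomial.quotientSpanLift_mk_X _ _ _ _

@[simp] theorem cToTensor_rC (i : ℕ) : cToTensor (rC i) = rR i ⊗ₜ 1 :=
  MvPolynomial.quotientSpanLift_mk_X _ _ _ _

@[simp] theorem cToTensor_τiC (i : ℕ) : cToTensor (τiC i) = 1 ⊗ₜ τiB i :=
  MvPolynomial.quotientSpanLift_mk_X _ _ _ _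

@[simp] theorem cToTensor_ξC (j : Ξ) : cToTensor (ξC j) = 1 ⊗ₜ ξB j :=
  MvPolynomial.quotientSpanLift_mk_X _ _ _ _

theorem tensorToC_comp_cToTensor :
    (tensorToC.restrictScalars F2).comp cToTensor = AlgHom.id F2 C := by
  refine MvPolynomial.quotient_algHom_ext ?_
  rintro (_ | i | i | j)
  · show tensorToC (cToTensor ρC) = ρC
    simp
  · show tensorToC (cToTensor (rC i)) = rC i
    simp
  · show tensorToC (cToTensor (τiC i)) = τiC i
    simp
  · show tensorToC (cToTensor (ξC j)) = ξC j
    simp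

theorem cToTensor_comp_rToC :
    cToTensor.comp rToC = (Algebra.TensorProduct.includeLeft : R →ₐ[F2] R ⊗[A] B) := by
  refine MvPolynomial.quotient_algHom_ext (S := R ⊗[A] B) ?_
  rintro (_ | i)
  · show cToTensor (rToC ρR) = ρR ⊗ₜ 1
    simp
  · show cToTensor (rToC (rR i)) = rR i ⊗ₜ 1
    simp

theorem cToTensor_comp_bToC :
    cToTensor.comp bToC =
      (Algebra.TensorProduct.includeRight : B →ₐ[A] R ⊗[A] B).restrictScalars F2 := by
  refine MvPolynomial.quotient_algHom_ext (S := R ⊗[A] B) ?_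
  rintro (_ | _ | i | j)
  · show cToTensor (bToC τB) = 1 ⊗ₜ τB
    rw [bToC_τB, map_mul, cToTensor_ρC, cToTensor_rC, ρR_tmul_one_mul_rR_zero_tmul_one]
  · show cToTensor (bToC ρB) = 1 ⊗ₜ ρB
    simp [ρR_tmul_one]
  · show cToTensor (bToC (τiB i)) = 1 ⊗ₜ τiB i
    simp
  · show cToTensor (bToC (ξB j)) = 1 ⊗ₜ ξB j
    simp

theorem cToTensor_tensorToC (x : R ⊗[A] B) : cToTensor (tensorToC x) = x := by
  induction x using TensorProduct.induction_on with
  | zero => simp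
  | tmul r b =>
    rw [tensorToC_tmul, map_mul, ← AlgHom.comp_apply, ← AlgHom.comp_apply, cToTensor_comp_rToC,
      cToTensor_comp_bToC]
    simp
  | add x y hx hy => simp [hx, hy]

def tensorEquivC : R ⊗[A] B ≃ₐ[F2] C :=
  AlgEquiv.ofAlgHom (tensorToC.restrictScalars F2) cToTensor tensorToC_comp_cToTensor
    (AlgHom.ext cToTensor_tensorToC)

/-- There is an isomorphism of `F₂`-algebras `R ⊗_A B ≅ C` sending `ρ⊗1 ↦ ρ`, `rᵢ⊗1 ↦ rᵢ`,
`1⊗τᵢ ↦ τᵢ`, `1⊗ξⱼ ↦ ξⱼ`, under which `1⊗τ` corresponds to `ρ·r₀`. -/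
theorem tensor_iso_isotropic_dual_steenrod :
    ∃ e : (R ⊗[A] B) ≃ₐ[F2] C,
      e (ρR ⊗ₜ 1) = ρC ∧
      (∀ i : ℕ, e (rR i ⊗ₜ 1) = rC i) ∧
      (∀ i : ℕ, e (1 ⊗ₜ τiB i) = τiC i) ∧
      (∀ j : Ξ, e (1 ⊗ₜ ξB j) = ξC j) ∧
      e (1 ⊗ₜ τB) = ρC * rC 0 := by
  refine ⟨tensorEquivC, ?_, fun i => ?_, fun i => ?_, fun j => ?_, ?_⟩ <;>
    simp [tensorEquivC]

end
end
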